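/- arXiv:math/0701025 — 8 statements merged into one kernel-verified Lean document; each statement's English description precedes it below -/
import Mathlib

section
/- Let M be a complete lattice with a binary operation c : M → M → M (the internal coproduct) satisfying L₁ ⊔ L₂ ≤ c(L₁, L₂) for all L₁, L₂. Call K ∈ M 'fully coprime' if K ≠ ⊥ and for all X, Y ∈ M, K ≤ c(X,Y) implies K ≤ X or K ≤ Y. Let Spec be the set of fully coprime elements. Then for all L₁, L₂ ∈ M: X(L₁ ⊔ L₂) = X(L₁) ∩ X(L₂) = X(c(L₁,L₂)), where X(L) := {K ∈ Spec | ¬(K ≤ L)}. In particular {X(L) | L ∈ M} is a topology on Spec. -/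
/-- Lemma 3.3 / Theorem 3.7 (abstract): for the fully coprime spectrum w.r.t. an
internal coproduct `c`, `X (L₁ ⊔ L₂) = X L₁ ∩ X L₂ = X (c L₁ L₂)`, so the `X L`
form a topology. -/
theorem stmt1 {α : Type*} [CompleteLattice α] (c : α → α → α)
    (hc : ∀ X Y : α, X ⊔ Y ≤ c X Y)
    (Spec : Set α)
    (hSpec : Spec = {K : α | K ≠ ⊥ ∧ ∀ X Y : α, K ≤ c X Y → K ≤ X ∨ K ≤ Y})
    (X : α → Set Spec) (hX : ∀ L : α, X L = {K : Spec | ¬ (K : α) ≤ L}) :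
    (∀ L₁ L₂ : α, X (L₁ ⊔ L₂) = X L₁ ∩ X L₂ ∧ X L₁ ∩ X L₂ = X (c L₁ L₂)) ∧
    (∃ t : TopologicalSpace Spec, ∀ s : Set Spec, @IsOpen _ t s ↔ ∃ L : α, s = X L) := by
  have hcop : ∀ K : Spec, ∀ A B : α, (K : α) ≤ c A B → (K : α) ≤ A ∨ (K : α) ≤ B := by
    intro K A B h
    have := K.2
    simp only [hSpec, Set.mem_setOf_eq] at this
    exact this.2 A B h
  have hne : ∀ K : Spec, (K : α) ≠ ⊥ := by
    intro K
    have := K.2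
    simp only [hSpec, Set.mem_setOf_eq] at this
    exact this.1
  have key : ∀ L₁ L₂ : α, X (L₁ ⊔ L₂) = X L₁ ∩ X L₂ := by
    intro L₁ L₂
    ext K
    simp only [hX, Set.mem_setOf_eq, Set.mem_inter_iff]
    constructor
    · intro h
      constructor
      · exact fun h1 => h (h1.trans le_sup_left)
      · exact fun h2 => h (h2.trans le_sup_right)
    · rintro ⟨h1, h2⟩ h
      rcases hcop K L₁ L₂ (h.trans (hc L₁ L₂)) with h' | h'
      · exact h1 h'
      · exact h2 h'
  have key2 : ∀ L₁ L₂ : α, X L₁ ∩ X L₂ = X (c L₁ L₂) := by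
    intro L₁ L₂
    ext K
    simp only [hX, Set.mem_setOf_eq, Set.mem_inter_iff]
    constructor
    · rintro ⟨h1, h2⟩ h
      rcases hcop K L₁ L₂ h with h' | h'
      · exact h1 h'
      · exact h2 h'
    · intro h
      refine ⟨fun h1 => h ?_, fun h2 => h ?_⟩
      · exact (h1.trans le_sup_left).trans (hc L₁ L₂)
      · exact (h2.trans le_sup_right).trans (hc L₁ L₂)
  refine ⟨fun L₁ L₂ => ⟨key L₁ L₂, key2 L₁ L₂⟩, ?_⟩
  refine ⟨⟨fun s => ∃ L : α, s = X L, ?_, ?_, ?_⟩, fun s => Iff.rfl⟩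
  · refine ⟨⊥, ?_⟩
    ext K
    simp only [hX, Set.mem_setOf_eq, Set.mem_univ, true_iff, le_bot_iff]
    exact hne K
  · rintro s t ⟨L₁, rfl⟩ ⟨L₂, rfl⟩
    exact ⟨L₁ ⊔ L₂, (key L₁ L₂).symm⟩
  · intro S hS
    refine ⟨sInf {L : α | X L ∈ S}, ?_⟩
    ext K
    constructor
    · rintro ⟨s, hs, hKs⟩
      obtain ⟨L, rfl⟩ := hS s hs
      rw [hX]
      intro hle
      rw [hX] at hKs
      exact hKs (hle.trans (sInf_le hs))
    · intro h
      rw [hX] at h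
      simp only [Set.mem_setOf_eq, le_sInf_iff, not_forall] at h
      obtain ⟨L, hL, hKL⟩ := h
      exact ⟨X L, hL, by rw [hX]; exact hKL⟩
end

section
/- Let M be a complete lattice with internal coproduct c (satisfying X ⊔ Y ≤ c(X,Y)) and fully coprime spectrum Spec with Zariski topology. Define CPcorad := ⨆{K | K ∈ Spec} (the fully coprime coradical). Assume Spec ≠ ∅. Then the topological space Spec is irreducible if and only if CPcorad ∈ Spec (i.e., the fully coprime coradical is itself fully coprime). -/
/-- Proposition 3.19 (abstract): a nonempty fully coprime spectrum with the
Zariski topology is irreducible iff the fully coprime coradical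
`⨆ {K | K ∈ Spec} = sSup Spec` is itself fully coprime (i.e. lies in `Spec`). -/
theorem stmt6 {α : Type*} [CompleteLattice α] (c : α → α → α)
    (hc : ∀ X Y : α, X ⊔ Y ≤ c X Y)
    (Spec : Set α)
    (hSpec : Spec = {K : α | K ≠ ⊥ ∧ ∀ X Y : α, K ≤ c X Y → K ≤ X ∨ K ≤ Y})
    (t : TopologicalSpace Spec)
    (ht : ∀ s : Set Spec, @IsClosed _ t s ↔ ∃ L : α, s = {K : Spec | (K : α) ≤ L})
    (hne : Spec.Nonempty) :
    @IrreducibleSpace Spec t ↔ sSup Spec ∈ Spec := by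
  letI := t
  have hmem : ∀ L : α, L ∈ Spec ↔ (L ≠ ⊥ ∧ ∀ X Y : α, L ≤ c X Y → L ≤ X ∨ L ≤ Y) := by
    intro L; rw [hSpec]; exact Iff.rfl
  constructor
  · intro hirr
    obtain ⟨K0, hK0⟩ := hne
    refine (hmem _).2 ⟨?_, ?_⟩
    · intro h
      exact ((hmem _).1 hK0).1 (le_antisymm (h ▸ le_sSup hK0) bot_le)
    · intro X Y hXY
      have hclX : IsClosed {K : Spec | (K : α) ≤ X} := (ht _).2 ⟨X, rfl⟩
      have hclY : IsClosed {K : Spec | (K : α) ≤ Y} := (ht _).2 ⟨Y, rfl⟩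
      have hcover : (Set.univ : Set Spec) ⊆ {K : Spec | (K : α) ≤ X} ∪ {K : Spec | (K : α) ≤ Y} := by
        intro K _
        exact ((hmem _).1 K.2).2 X Y (le_trans (le_sSup K.2) hXY)
      have hpre : IsPreirreducible (Set.univ : Set Spec) :=
        (IrreducibleSpace.isIrreducible_univ (Spec : Type _)).2
      rcases (isPreirreducible_iff_isClosed_union_isClosed.1 hpre) _ _ hclX hclY hcover with h | h
      · exact Or.inl (sSup_le fun K hK => h (Set.mem_univ (⟨K, hK⟩ : Spec)))
      · exact Or.inr (sSup_le fun K hK => h (Set.mem_univ (⟨K, hK⟩ : Spec)))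
  · intro hS
    have hS' := (hmem _).1 hS
    refine { toNonempty := ⟨⟨hne.choose, hne.choose_spec⟩⟩, isPreirreducible_univ := ?_ }
    rw [isPreirreducible_iff_isClosed_union_isClosed]
    intro z₁ z₂ hz₁ hz₂ hcover
    obtain ⟨L₁, rfl⟩ := (ht _).1 hz₁
    obtain ⟨L₂, rfl⟩ := (ht _).1 hz₂
    have hle : sSup Spec ≤ c L₁ L₂ := by
      refine sSup_le fun K hK => ?_
      rcases hcover (Set.mem_univ (⟨K, hK⟩ : Spec)) with h | h
      · exact le_trans (le_trans h le_sup_left) (hc L₁ L₂)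
      · exact le_trans (le_trans h le_sup_right) (hc L₁ L₂)
    rcases hS'.2 L₁ L₂ hle with h | h
    · exact Or.inl fun K _ => le_trans (le_sSup K.2) h
    · exact Or.inr fun K _ => le_trans (le_sSup K.2) h
end

section
/- Let M be a complete lattice with fully coprime spectrum Spec and Zariski topology, and assume Property S (every nonzero element dominates an atom) and that all atoms lie in Spec. Then: M is subdirectly irreducible (i.e., the meet of all nonzero elements of M is nonzero, equivalently any two nonzero elements have nonzero meet) if and only if any two nonempty closed subsets of Spec have nonempty intersection. -/
/-- Lemma 3.21(1) (abstract): `M` is subdirectly irreducible (any two nonzero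
elements have nonzero meet) iff any two nonempty closed subsets of the fully
coprime spectrum intersect. -/
theorem stmt7 {α : Type*} [CompleteLattice α] (c : α → α → α)
    (hc : ∀ X Y : α, X ⊔ Y ≤ c X Y)
    (Spec : Set α)
    (hSpec : Spec = {K : α | K ≠ ⊥ ∧ ∀ X Y : α, K ≤ c X Y → K ≤ X ∨ K ≤ Y})
    (S : Set α) (hS : S = {K : α | IsAtom K})
    (hSSpec : S ⊆ Spec)
    (hPropS : ∀ L : α, L ≠ ⊥ → ∃ a ∈ S, a ≤ L)
    (t : TopologicalSpace Spec)
    (ht : ∀ s : Set Spec, @IsClosed _ t s ↔ ∃ L : α, s = {K : Spec | (K : α) ≤ L}) :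
    (∀ x y : α, x ≠ ⊥ → y ≠ ⊥ → x ⊓ y ≠ ⊥) ↔
      (∀ s₁ s₂ : Set Spec, @IsClosed _ t s₁ → @IsClosed _ t s₂ →
        s₁.Nonempty → s₂.Nonempty → (s₁ ∩ s₂).Nonempty) := by
  have hne : ∀ K : Spec, (K : α) ≠ ⊥ := by
    intro K
    have h2 : (K : α) ∈ {K : α | K ≠ ⊥ ∧ ∀ X Y : α, K ≤ c X Y → K ≤ X ∨ K ≤ Y} :=
      hSpec ▸ K.2
    exact h2.1
  constructor
  · intro h s₁ s₂ hc1 hc2 hn1 hn2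
    obtain ⟨L₁, rfl⟩ := (ht s₁).1 hc1
    obtain ⟨L₂, rfl⟩ := (ht s₂).1 hc2
    obtain ⟨K₁, hK₁⟩ := hn1
    obtain ⟨K₂, hK₂⟩ := hn2
    have hL₁ : L₁ ≠ ⊥ := fun h' => hne K₁ (le_bot_iff.1 (h' ▸ hK₁ : (K₁ : α) ≤ ⊥))
    have hL₂ : L₂ ≠ ⊥ := fun h' => hne K₂ (le_bot_iff.1 (h' ▸ hK₂ : (K₂ : α) ≤ ⊥))
    obtain ⟨a, haS, haL⟩ := hPropS _ (h _ _ hL₁ hL₂)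
    exact ⟨⟨a, hSSpec haS⟩, le_trans haL inf_le_left, le_trans haL inf_le_right⟩
  · intro h x y hx hy
    obtain ⟨ax, haxS, hax⟩ := hPropS x hx
    obtain ⟨ay, hayS, hay⟩ := hPropS y hy
    obtain ⟨K, hKx, hKy⟩ := h {K : Spec | (K : α) ≤ x} {K : Spec | (K : α) ≤ y}
      ((ht _).2 ⟨x, rfl⟩) ((ht _).2 ⟨y, rfl⟩)
      ⟨⟨ax, hSSpec haxS⟩, hax⟩ ⟨⟨ay, hSSpec hayS⟩, hay⟩
    have hK : (K : α) ≠ ⊥ := hne K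
    exact fun h' => hK (le_bot_iff.1 (h' ▸ le_inf hKx hKy : (K : α) ≤ ⊥))
end

section
/- Let M be a complete lattice with internal coproduct c satisfying X ⊔ Y ≤ c(X,Y), Spec the fully coprime spectrum with Zariski topology. For every K ∈ Spec, the closed subset V(K) = {P ∈ Spec | P ≤ K} is an irreducible subspace of Spec. -/
/-- Proposition 3.23(1) (abstract): for every `K` in the fully coprime
spectrum, the closed set `V K = {P ∈ Spec | P ≤ K}` is an irreducible subspace. -/
theorem stmt9 {α : Type*} [CompleteLattice α] (c : α → α → α)
    (hc : ∀ X Y : α, X ⊔ Y ≤ c X Y)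
    (Spec : Set α)
    (hSpec : Spec = {K : α | K ≠ ⊥ ∧ ∀ X Y : α, K ≤ c X Y → K ≤ X ∨ K ≤ Y})
    (t : TopologicalSpace Spec)
    (ht : ∀ s : Set Spec, @IsClosed _ t s ↔ ∃ L : α, s = {K : Spec | (K : α) ≤ L})
    (K : Spec) :
    @IsIrreducible Spec t {P : Spec | (P : α) ≤ (K : α)} := by
  constructor
  · exact ⟨K, le_refl _⟩
  · rw [isPreirreducible_iff_isClosed_union_isClosed]
    intro z1 z2 hz1 hz2 hsub
    obtain ⟨L1, rfl⟩ := (ht z1).mp hz1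
    obtain ⟨L2, rfl⟩ := (ht z2).mp hz2
    rcases hsub (le_refl (K : α)) with h | h
    · left; intro P hP; exact le_trans hP h
    · right; intro P hP; exact le_trans hP h
end

section
/- Let M be a complete lattice with internal coproduct c and fully coprime spectrum Spec with Zariski topology. If V(L) is an irreducible component (a maximal irreducible closed subset) of Spec for some L ∈ Spec-generated closed set, and L = ⨆ V(L), then L is a maximal element of Spec: L ∈ Spec and there is no K ∈ Spec with L < K. -/
/-- Proposition 3.23(2) (abstract): if `V L` is an irreducible component of the
fully coprime spectrum and `L = ⨆ V L`, then `L` is a maximal element of `Spec`. -/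
theorem stmt10 {α : Type*} [CompleteLattice α] (c : α → α → α)
    (hc : ∀ X Y : α, X ⊔ Y ≤ c X Y)
    (Spec : Set α)
    (hSpec : Spec = {K : α | K ≠ ⊥ ∧ ∀ X Y : α, K ≤ c X Y → K ≤ X ∨ K ≤ Y})
    (t : TopologicalSpace Spec)
    (ht : ∀ s : Set Spec, @IsClosed _ t s ↔ ∃ L : α, s = {K : Spec | (K : α) ≤ L})
    (L : α)
    (hirr : @IsIrreducible Spec t {K : Spec | (K : α) ≤ L})
    (hmax : ∀ s : Set Spec, @IsIrreducible Spec t s →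
      {K : Spec | (K : α) ≤ L} ⊆ s → s = {K : Spec | (K : α) ≤ L})
    (hL : L = sSup {K : α | K ∈ Spec ∧ K ≤ L}) :
    L ∈ Spec ∧ ∀ K ∈ Spec, ¬ L < K := by
  letI := t
  have hcl : ∀ X : α, IsClosed {K : Spec | (K : α) ≤ X} := fun X => (ht _).2 ⟨X, rfl⟩
  have hmem : ∀ x : α, x ∈ Spec → x ≠ ⊥ ∧ ∀ X Y : α, x ≤ c X Y → x ≤ X ∨ x ≤ Y := by
    intro x hx; rw [hSpec] at hx; exact hx
  have hmem' : ∀ x : α, (x ≠ ⊥ ∧ ∀ X Y : α, x ≤ c X Y → x ≤ X ∨ x ≤ Y) → x ∈ Spec := by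
    intro x hx; rw [hSpec]; exact hx
  obtain ⟨K0, hK0⟩ := hirr.1
  have hK0spec := hmem _ K0.2
  have hLbot : L ≠ ⊥ := by
    intro h
    exact hK0spec.1 (le_bot_iff.mp (h ▸ hK0))
  have hLSpec : L ∈ Spec := by
    refine hmem' _ ⟨hLbot, fun X Y hXY => ?_⟩
    have hsub : {K : Spec | (K : α) ≤ L} ⊆
        {K : Spec | (K : α) ≤ X} ∪ {K : Spec | (K : α) ≤ Y} := by
      intro K hK
      exact (hmem _ K.2).2 X Y (le_trans hK hXY)
    have := (isPreirreducible_iff_isClosed_union_isClosed.mp hirr.2) _ _ (hcl X) (hcl Y) hsub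
    rcases this with h | h
    · left
      rw [hL]
      exact sSup_le fun K hK => h (show (⟨K, hK.1⟩ : Spec) ∈ {K : Spec | (K : α) ≤ L} from hK.2)
    · right
      rw [hL]
      exact sSup_le fun K hK => h (show (⟨K, hK.1⟩ : Spec) ∈ {K : Spec | (K : α) ≤ L} from hK.2)
  refine ⟨hLSpec, fun K hK hLK => ?_⟩
  have hirrK : IsIrreducible {K' : Spec | (K' : α) ≤ K} := by
    constructor
    · exact ⟨⟨K, hK⟩, le_refl K⟩
    · rw [isPreirreducible_iff_isClosed_union_isClosed]
      intro z1 z2 hz1 hz2 hsub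
      obtain ⟨X, rfl⟩ := (ht z1).1 hz1
      obtain ⟨Y, rfl⟩ := (ht z2).1 hz2
      rcases hsub (show (⟨K, hK⟩ : Spec) ∈ {K' : Spec | (K' : α) ≤ K} from le_refl K) with h | h
      · exact Or.inl fun K' hK' => le_trans hK' h
      · exact Or.inr fun K' hK' => le_trans hK' h
  have hsubK : {K' : Spec | (K' : α) ≤ L} ⊆ {K' : Spec | (K' : α) ≤ K} :=
    fun K' hK' => le_trans hK' hLK.le
  have heq := hmax _ hirrK hsubK
  have : (⟨K, hK⟩ : Spec) ∈ {K' : Spec | (K' : α) ≤ L} := heq ▸ le_refl K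
  exact hLK.not_ge this
end

section
/- Let M be a complete lattice with fully coprime spectrum Spec and Zariski topology. Define φ(A) = ⨆_{K∈A} K for A ⊆ Spec, CPcorad(L) = ⨆{K ∈ Spec | K ≤ L}, ψ(L) = V(L), CL = {A ⊆ Spec | A closed}, and E = {L ∈ M | CPcorad(L) = L}. Then φ and ψ are mutually inverse bijections between CL and E. -/
/-- Theorem 3.27 (abstract): `φ : A ↦ ⨆_{K∈A} K` and `ψ : L ↦ V L` are mutually
inverse bijections between the closed subsets of the fully coprime spectrum and
the elements `L` with `CPcorad L = L`. -/
theorem stmt13 {α : Type*} [CompleteLattice α] (Spec : Set α)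
    (t : TopologicalSpace Spec)
    (ht : ∀ s : Set Spec, @IsClosed _ t s ↔ ∃ L : α, s = {K : Spec | (K : α) ≤ L})
    (φ : Set Spec → α) (hφ : ∀ A : Set Spec, φ A = sSup ((↑) '' A : Set α))
    (ψ : α → Set Spec) (hψ : ∀ L : α, ψ L = {K : Spec | (K : α) ≤ L})
    (CL : Set (Set Spec)) (hCL : CL = {A : Set Spec | @IsClosed _ t A})
    (E : Set α) (hE : E = {L : α | sSup {K : α | K ∈ Spec ∧ K ≤ L} = L}) :
    (∀ A ∈ CL, φ A ∈ E) ∧ (∀ L ∈ E, ψ L ∈ CL) ∧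
    (∀ A ∈ CL, ψ (φ A) = A) ∧ (∀ L ∈ E, φ (ψ L) = L) := by
  have himg : ∀ L : α, ((↑) '' {K : Spec | (K : α) ≤ L} : Set α)
      = {K : α | K ∈ Spec ∧ K ≤ L} := by
    intro L
    ext x
    constructor
    · rintro ⟨⟨k, hk⟩, hkL, rfl⟩
      exact ⟨hk, hkL⟩
    · rintro ⟨hx, hxL⟩
      exact ⟨⟨x, hx⟩, hxL, rfl⟩
  refine ⟨?_, ?_, ?_, ?_⟩
  · intro A _
    rw [hE, hφ]
    simp only [Set.mem_setOf_eq]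
    apply le_antisymm
    · exact sSup_le (fun K hK => hK.2)
    · refine sSup_le_sSup ?_
      rintro x ⟨⟨k, hk⟩, hkA, rfl⟩
      exact ⟨hk, le_sSup ⟨⟨k, hk⟩, hkA, rfl⟩⟩
  · intro L _
    rw [hCL]
    exact (ht _).2 ⟨L, hψ L⟩
  · intro A hA
    rw [hCL] at hA
    obtain ⟨L, rfl⟩ := (ht _).1 hA
    rw [hψ, hφ]
    ext K
    simp only [Set.mem_setOf_eq]
    constructor
    · intro h
      exact h.trans (sSup_le (by rintro x ⟨⟨k, hk⟩, hkL, rfl⟩; exact hkL))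
    · intro h
      exact le_sSup ⟨K, h, rfl⟩
  · intro L hL
    rw [hE] at hL
    rw [hφ, hψ, himg]
    exact hL
end

section
/- Let C be a coalgebra over a commutative ring R. The map ψ : End_{C,C}(C) → C* sending a (C,C)-bicolinear endomorphism g to ε ∘ g is an injective algebra map onto the center-like subalgebra 𝐂(C) = {f ∈ C* | f ⇀ c = c ↼ f for all c ∈ C}, with inverse φ(f)(c) = Σ c₁ f(c₂). In particular, the ring (End_{C,C}(C), ∘) of bicomodule endomorphisms of C is commutative. -/
open TensorProduct

variable {R C : Type*} [CommRing R] [AddCommGroup C] [Module R C] [Coalgebra R C]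

/-- The rational right action `f ⇀ c := Σ c₁ f(c₂)` of the dual on `C`. -/
noncomputable def rAct (f : Module.Dual R C) : C →ₗ[R] C :=
  (TensorProduct.rid R C).toLinearMap ∘ₗ
    (TensorProduct.map (LinearMap.id : C →ₗ[R] C) f) ∘ₗ Coalgebra.comul

/-- The rational left action `c ↼ f := Σ f(c₁) c₂` of the dual on `C`. -/
noncomputable def lAct (f : Module.Dual R C) : C →ₗ[R] C :=
  (TensorProduct.lid R C).toLinearMap ∘ₗ
    (TensorProduct.map f (LinearMap.id : C →ₗ[R] C)) ∘ₗ Coalgebra.comul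

/-- `g : C → C` is a `(C,C)`-bicomodule (bicolinear) endomorphism. -/
def IsBicolinear (g : C →ₗ[R] C) : Prop :=
  Coalgebra.comul ∘ₗ g = (TensorProduct.map g (LinearMap.id : C →ₗ[R] C)) ∘ₗ Coalgebra.comul ∧
  Coalgebra.comul ∘ₗ g = (TensorProduct.map (LinearMap.id : C →ₗ[R] C) g) ∘ₗ Coalgebra.comul

/-- Convolution product on the dual. -/
noncomputable def conv (f g : Module.Dual R C) : Module.Dual R C :=
  (LinearMap.mul' R R) ∘ₗ (TensorProduct.map f g) ∘ₗ Coalgebra.comul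

/-- `ψ : g ↦ ε ∘ g`. -/
noncomputable def psiMap (g : C →ₗ[R] C) : Module.Dual R C :=
  (Coalgebra.counit : C →ₗ[R] R) ∘ₗ g

section Aux

set_option linter.unusedSectionVars false

variable {M N : Type*} [AddCommGroup M] [Module R M] [AddCommGroup N] [Module R N]

private lemma mapId_eq_lTensor (h : M →ₗ[R] N) :
    TensorProduct.map (LinearMap.id : C →ₗ[R] C) h = LinearMap.lTensor C h := rfl

private lemma mapId_eq_rTensor (h : M →ₗ[R] N) :
    TensorProduct.map h (LinearMap.id : C →ₗ[R] C) = LinearMap.rTensor C h := rfl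

end Aux

private lemma counitR :
    ((TensorProduct.rid R C).toLinearMap ∘ₗ
      TensorProduct.map (LinearMap.id : C →ₗ[R] C) (Coalgebra.counit : C →ₗ[R] R)) ∘ₗ
        (Coalgebra.comul : C →ₗ[R] C ⊗[R] C) = LinearMap.id := by
  apply LinearMap.ext; intro c
  simp only [LinearMap.comp_apply, mapId_eq_lTensor, Coalgebra.lTensor_counit_comul,
    LinearEquiv.coe_coe, TensorProduct.rid_tmul, one_smul, LinearMap.id_apply]

private lemma counitL :
    ((TensorProduct.lid R C).toLinearMap ∘ₗ
      TensorProduct.map (Coalgebra.counit : C →ₗ[R] R) (LinearMap.id : C →ₗ[R] C)) ∘ₗ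
        (Coalgebra.comul : C →ₗ[R] C ⊗[R] C) = LinearMap.id := by
  apply LinearMap.ext; intro c
  simp only [LinearMap.comp_apply, mapId_eq_rTensor, Coalgebra.rTensor_counit_comul,
    LinearEquiv.coe_coe, TensorProduct.lid_tmul, one_smul, LinearMap.id_apply]

/-- `ψ` is a left inverse of `φ = rAct` on right-colinear maps. -/
private lemma rAct_psi (g : C →ₗ[R] C)
    (hg : Coalgebra.comul ∘ₗ g
      = TensorProduct.map (LinearMap.id : C →ₗ[R] C) g ∘ₗ Coalgebra.comul) :
    rAct (psiMap g) = g := by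
  calc rAct (psiMap g)
      = (TensorProduct.rid R C).toLinearMap ∘ₗ
        ((TensorProduct.map (LinearMap.id : C →ₗ[R] C) (Coalgebra.counit : C →ₗ[R] R) ∘ₗ
          TensorProduct.map (LinearMap.id : C →ₗ[R] C) g) ∘ₗ Coalgebra.comul) := by
        rw [rAct, psiMap, mapId_eq_lTensor, LinearMap.lTensor_comp,
          ← mapId_eq_lTensor, ← mapId_eq_lTensor]
    _ = ((TensorProduct.rid R C).toLinearMap ∘ₗ
        TensorProduct.map (LinearMap.id : C →ₗ[R] C) (Coalgebra.counit : C →ₗ[R] R)) ∘ₗ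
          (TensorProduct.map (LinearMap.id : C →ₗ[R] C) g ∘ₗ Coalgebra.comul) := by
        simp only [LinearMap.comp_assoc]
    _ = ((TensorProduct.rid R C).toLinearMap ∘ₗ
        TensorProduct.map (LinearMap.id : C →ₗ[R] C) (Coalgebra.counit : C →ₗ[R] R)) ∘ₗ
          (Coalgebra.comul ∘ₗ g) := by rw [← hg]
    _ = (((TensorProduct.rid R C).toLinearMap ∘ₗ
        TensorProduct.map (LinearMap.id : C →ₗ[R] C) (Coalgebra.counit : C →ₗ[R] R)) ∘ₗ
          Coalgebra.comul) ∘ₗ g := by simp only [LinearMap.comp_assoc]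
    _ = g := by rw [counitR, LinearMap.id_comp]

private lemma lAct_psi (g : C →ₗ[R] C)
    (hg : Coalgebra.comul ∘ₗ g
      = TensorProduct.map g (LinearMap.id : C →ₗ[R] C) ∘ₗ Coalgebra.comul) :
    lAct (psiMap g) = g := by
  calc lAct (psiMap g)
      = (TensorProduct.lid R C).toLinearMap ∘ₗ
        ((TensorProduct.map (Coalgebra.counit : C →ₗ[R] R) (LinearMap.id : C →ₗ[R] C) ∘ₗ
          TensorProduct.map g (LinearMap.id : C →ₗ[R] C)) ∘ₗ Coalgebra.comul) := by
        rw [lAct, psiMap, mapId_eq_rTensor, LinearMap.rTensor_comp,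
          ← mapId_eq_rTensor, ← mapId_eq_rTensor]
    _ = ((TensorProduct.lid R C).toLinearMap ∘ₗ
        TensorProduct.map (Coalgebra.counit : C →ₗ[R] R) (LinearMap.id : C →ₗ[R] C)) ∘ₗ
          (TensorProduct.map g (LinearMap.id : C →ₗ[R] C) ∘ₗ Coalgebra.comul) := by
        simp only [LinearMap.comp_assoc]
    _ = ((TensorProduct.lid R C).toLinearMap ∘ₗ
        TensorProduct.map (Coalgebra.counit : C →ₗ[R] R) (LinearMap.id : C →ₗ[R] C)) ∘ₗ
          (Coalgebra.comul ∘ₗ g) := by rw [← hg]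
    _ = (((TensorProduct.lid R C).toLinearMap ∘ₗ
        TensorProduct.map (Coalgebra.counit : C →ₗ[R] R) (LinearMap.id : C →ₗ[R] C)) ∘ₗ
          Coalgebra.comul) ∘ₗ g := by simp only [LinearMap.comp_assoc]
    _ = g := by rw [counitL, LinearMap.id_comp]

/-- `ψ ∘ φ = id` on the dual. -/
private lemma psi_rAct (f : Module.Dual R C) : psiMap (rAct f) = f := by
  have key : (Coalgebra.counit : C →ₗ[R] R) ∘ₗ ((TensorProduct.rid R C).toLinearMap ∘ₗ
      TensorProduct.map (LinearMap.id : C →ₗ[R] C) f)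
      = f ∘ₗ ((TensorProduct.lid R C).toLinearMap ∘ₗ
          TensorProduct.map (Coalgebra.counit : C →ₗ[R] R) (LinearMap.id : C →ₗ[R] C)) := by
    apply TensorProduct.ext'; intro x y
    simp [mul_comm]
  calc psiMap (rAct f)
      = ((Coalgebra.counit : C →ₗ[R] R) ∘ₗ ((TensorProduct.rid R C).toLinearMap ∘ₗ
          TensorProduct.map (LinearMap.id : C →ₗ[R] C) f)) ∘ₗ Coalgebra.comul := by
        rw [psiMap, rAct]; simp only [LinearMap.comp_assoc]
    _ = (f ∘ₗ ((TensorProduct.lid R C).toLinearMap ∘ₗ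
          TensorProduct.map (Coalgebra.counit : C →ₗ[R] R) (LinearMap.id : C →ₗ[R] C))) ∘ₗ
            Coalgebra.comul := by rw [key]
    _ = f ∘ₗ (((TensorProduct.lid R C).toLinearMap ∘ₗ
          TensorProduct.map (Coalgebra.counit : C →ₗ[R] R) (LinearMap.id : C →ₗ[R] C)) ∘ₗ
            Coalgebra.comul) := by simp only [LinearMap.comp_assoc]
    _ = f := by rw [counitL, LinearMap.comp_id]

/-- `rAct f` is always right-colinear. -/
private lemma rAct_right (f : Module.Dual R C) :
    Coalgebra.comul ∘ₗ rAct f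
      = TensorProduct.map (LinearMap.id : C →ₗ[R] C) (rAct f) ∘ₗ Coalgebra.comul := by
  have A1 : (Coalgebra.comul : C →ₗ[R] C ⊗[R] C) ∘ₗ (TensorProduct.rid R C).toLinearMap
      = (TensorProduct.rid R (C ⊗[R] C)).toLinearMap ∘ₗ
          LinearMap.rTensor R (Coalgebra.comul : C →ₗ[R] C ⊗[R] C) := by
    apply TensorProduct.ext'; intro x r; simp
  have A2 : LinearMap.rTensor R (Coalgebra.comul : C →ₗ[R] C ⊗[R] C) ∘ₗ
      TensorProduct.map (LinearMap.id : C →ₗ[R] C) f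
      = LinearMap.lTensor (C ⊗[R] C) f ∘ₗ
          LinearMap.rTensor C (Coalgebra.comul : C →ₗ[R] C ⊗[R] C) := by
    apply TensorProduct.ext'; intro x y; simp
  have A5 : (TensorProduct.rid R (C ⊗[R] C)).toLinearMap ∘ₗ LinearMap.lTensor (C ⊗[R] C) f
      = (TensorProduct.map (LinearMap.id : C →ₗ[R] C)
          ((TensorProduct.rid R C).toLinearMap ∘ₗ
            TensorProduct.map (LinearMap.id : C →ₗ[R] C) f)) ∘ₗ
        (TensorProduct.assoc R C C C).toLinearMap := by
    apply TensorProduct.ext_threefold; intro x y z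
    simp [TensorProduct.smul_tmul']
  calc Coalgebra.comul ∘ₗ rAct f
      = (Coalgebra.comul ∘ₗ (TensorProduct.rid R C).toLinearMap) ∘ₗ
          (TensorProduct.map (LinearMap.id : C →ₗ[R] C) f ∘ₗ Coalgebra.comul) := by
        rw [rAct]; simp only [LinearMap.comp_assoc]
    _ = ((TensorProduct.rid R (C ⊗[R] C)).toLinearMap ∘ₗ
          LinearMap.rTensor R Coalgebra.comul) ∘ₗ
          (TensorProduct.map (LinearMap.id : C →ₗ[R] C) f ∘ₗ Coalgebra.comul) := by rw [A1]
    _ = (TensorProduct.rid R (C ⊗[R] C)).toLinearMap ∘ₗ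
          ((LinearMap.rTensor R Coalgebra.comul ∘ₗ
            TensorProduct.map (LinearMap.id : C →ₗ[R] C) f) ∘ₗ Coalgebra.comul) := by
        simp only [LinearMap.comp_assoc]
    _ = (TensorProduct.rid R (C ⊗[R] C)).toLinearMap ∘ₗ
          ((LinearMap.lTensor (C ⊗[R] C) f ∘ₗ LinearMap.rTensor C Coalgebra.comul) ∘ₗ
            Coalgebra.comul) := by rw [A2]
    _ = ((TensorProduct.rid R (C ⊗[R] C)).toLinearMap ∘ₗ LinearMap.lTensor (C ⊗[R] C) f) ∘ₗ
          ((Coalgebra.comul : C →ₗ[R] C ⊗[R] C).rTensor C ∘ₗ Coalgebra.comul) := by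
        simp only [LinearMap.comp_assoc]
    _ = ((TensorProduct.map (LinearMap.id : C →ₗ[R] C)
          ((TensorProduct.rid R C).toLinearMap ∘ₗ
            TensorProduct.map (LinearMap.id : C →ₗ[R] C) f)) ∘ₗ
        (TensorProduct.assoc R C C C).toLinearMap) ∘ₗ
          ((Coalgebra.comul : C →ₗ[R] C ⊗[R] C).rTensor C ∘ₗ Coalgebra.comul) := by rw [A5]
    _ = TensorProduct.map (LinearMap.id : C →ₗ[R] C)
          ((TensorProduct.rid R C).toLinearMap ∘ₗ
            TensorProduct.map (LinearMap.id : C →ₗ[R] C) f) ∘ₗ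
        ((TensorProduct.assoc R C C C).toLinearMap ∘ₗ
          (Coalgebra.comul : C →ₗ[R] C ⊗[R] C).rTensor C ∘ₗ Coalgebra.comul) := by
        simp only [LinearMap.comp_assoc]
    _ = TensorProduct.map (LinearMap.id : C →ₗ[R] C)
          ((TensorProduct.rid R C).toLinearMap ∘ₗ
            TensorProduct.map (LinearMap.id : C →ₗ[R] C) f) ∘ₗ
        ((Coalgebra.comul : C →ₗ[R] C ⊗[R] C).lTensor C ∘ₗ Coalgebra.comul) := by
        rw [Coalgebra.coassoc]
    _ = (TensorProduct.map (LinearMap.id : C →ₗ[R] C)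
          ((TensorProduct.rid R C).toLinearMap ∘ₗ
            TensorProduct.map (LinearMap.id : C →ₗ[R] C) f) ∘ₗ
        LinearMap.lTensor C (Coalgebra.comul : C →ₗ[R] C ⊗[R] C)) ∘ₗ Coalgebra.comul := by
        simp only [LinearMap.comp_assoc]
    _ = TensorProduct.map (LinearMap.id : C →ₗ[R] C) (rAct f) ∘ₗ Coalgebra.comul := by
        rw [rAct, mapId_eq_lTensor ((TensorProduct.rid R C).toLinearMap ∘ₗ
          TensorProduct.map (LinearMap.id : C →ₗ[R] C) f ∘ₗ Coalgebra.comul)]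
        rw [show (TensorProduct.rid R C).toLinearMap ∘ₗ
          TensorProduct.map (LinearMap.id : C →ₗ[R] C) f ∘ₗ Coalgebra.comul
          = ((TensorProduct.rid R C).toLinearMap ∘ₗ
            TensorProduct.map (LinearMap.id : C →ₗ[R] C) f) ∘ₗ Coalgebra.comul from by
              simp only [LinearMap.comp_assoc]]
        rw [LinearMap.lTensor_comp, ← mapId_eq_lTensor]
        rfl

/-- `lAct f` is always left-colinear. -/
private lemma lAct_left (f : Module.Dual R C) :
    Coalgebra.comul ∘ₗ lAct f
      = TensorProduct.map (lAct f) (LinearMap.id : C →ₗ[R] C) ∘ₗ Coalgebra.comul := by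
  have B1 : (Coalgebra.comul : C →ₗ[R] C ⊗[R] C) ∘ₗ (TensorProduct.lid R C).toLinearMap
      = (TensorProduct.lid R (C ⊗[R] C)).toLinearMap ∘ₗ
          LinearMap.lTensor R (Coalgebra.comul : C →ₗ[R] C ⊗[R] C) := by
    apply TensorProduct.ext'; intro r x; simp
  have B2 : LinearMap.lTensor R (Coalgebra.comul : C →ₗ[R] C ⊗[R] C) ∘ₗ
      TensorProduct.map f (LinearMap.id : C →ₗ[R] C)
      = LinearMap.rTensor (C ⊗[R] C) f ∘ₗ
          LinearMap.lTensor C (Coalgebra.comul : C →ₗ[R] C ⊗[R] C) := by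
    apply TensorProduct.ext'; intro x y; simp
  have B3 : ((TensorProduct.lid R (C ⊗[R] C)).toLinearMap ∘ₗ
        LinearMap.rTensor (C ⊗[R] C) f) ∘ₗ (TensorProduct.assoc R C C C).toLinearMap
      = TensorProduct.map
          ((TensorProduct.lid R C).toLinearMap ∘ₗ
            TensorProduct.map f (LinearMap.id : C →ₗ[R] C))
          (LinearMap.id : C →ₗ[R] C) := by
    apply TensorProduct.ext_threefold; intro x y z
    simp [TensorProduct.smul_tmul']
  calc Coalgebra.comul ∘ₗ lAct f
      = (Coalgebra.comul ∘ₗ (TensorProduct.lid R C).toLinearMap) ∘ₗ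
          (TensorProduct.map f (LinearMap.id : C →ₗ[R] C) ∘ₗ Coalgebra.comul) := by
        rw [lAct]; simp only [LinearMap.comp_assoc]
    _ = ((TensorProduct.lid R (C ⊗[R] C)).toLinearMap ∘ₗ
          LinearMap.lTensor R Coalgebra.comul) ∘ₗ
          (TensorProduct.map f (LinearMap.id : C →ₗ[R] C) ∘ₗ Coalgebra.comul) := by rw [B1]
    _ = (TensorProduct.lid R (C ⊗[R] C)).toLinearMap ∘ₗ
          ((LinearMap.lTensor R Coalgebra.comul ∘ₗ
            TensorProduct.map f (LinearMap.id : C →ₗ[R] C)) ∘ₗ Coalgebra.comul) := by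
        simp only [LinearMap.comp_assoc]
    _ = (TensorProduct.lid R (C ⊗[R] C)).toLinearMap ∘ₗ
          ((LinearMap.rTensor (C ⊗[R] C) f ∘ₗ LinearMap.lTensor C Coalgebra.comul) ∘ₗ
            Coalgebra.comul) := by rw [B2]
    _ = ((TensorProduct.lid R (C ⊗[R] C)).toLinearMap ∘ₗ LinearMap.rTensor (C ⊗[R] C) f) ∘ₗ
          ((Coalgebra.comul : C →ₗ[R] C ⊗[R] C).lTensor C ∘ₗ Coalgebra.comul) := by
        simp only [LinearMap.comp_assoc]
    _ = ((TensorProduct.lid R (C ⊗[R] C)).toLinearMap ∘ₗ LinearMap.rTensor (C ⊗[R] C) f) ∘ₗ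
          ((TensorProduct.assoc R C C C).toLinearMap ∘ₗ
            ((Coalgebra.comul : C →ₗ[R] C ⊗[R] C).rTensor C ∘ₗ Coalgebra.comul)) := by
        rw [show (TensorProduct.assoc R C C C).toLinearMap ∘ₗ
          ((Coalgebra.comul : C →ₗ[R] C ⊗[R] C).rTensor C ∘ₗ Coalgebra.comul)
          = (Coalgebra.comul : C →ₗ[R] C ⊗[R] C).lTensor C ∘ₗ Coalgebra.comul from
            Coalgebra.coassoc]
    _ = (((TensorProduct.lid R (C ⊗[R] C)).toLinearMap ∘ₗ LinearMap.rTensor (C ⊗[R] C) f) ∘ₗ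
          (TensorProduct.assoc R C C C).toLinearMap) ∘ₗ
            ((Coalgebra.comul : C →ₗ[R] C ⊗[R] C).rTensor C ∘ₗ Coalgebra.comul) := by
        simp only [LinearMap.comp_assoc]
    _ = TensorProduct.map
          ((TensorProduct.lid R C).toLinearMap ∘ₗ
            TensorProduct.map f (LinearMap.id : C →ₗ[R] C))
          (LinearMap.id : C →ₗ[R] C) ∘ₗ
            ((Coalgebra.comul : C →ₗ[R] C ⊗[R] C).rTensor C ∘ₗ Coalgebra.comul) := by rw [B3]
    _ = (TensorProduct.map
          ((TensorProduct.lid R C).toLinearMap ∘ₗ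
            TensorProduct.map f (LinearMap.id : C →ₗ[R] C))
          (LinearMap.id : C →ₗ[R] C) ∘ₗ
            LinearMap.rTensor C (Coalgebra.comul : C →ₗ[R] C ⊗[R] C)) ∘ₗ Coalgebra.comul := by
        simp only [LinearMap.comp_assoc]
    _ = TensorProduct.map (lAct f) (LinearMap.id : C →ₗ[R] C) ∘ₗ Coalgebra.comul := by
        rw [lAct, mapId_eq_rTensor ((TensorProduct.lid R C).toLinearMap ∘ₗ
          TensorProduct.map f (LinearMap.id : C →ₗ[R] C) ∘ₗ Coalgebra.comul)]
        rw [show (TensorProduct.lid R C).toLinearMap ∘ₗ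
          TensorProduct.map f (LinearMap.id : C →ₗ[R] C) ∘ₗ Coalgebra.comul
          = ((TensorProduct.lid R C).toLinearMap ∘ₗ
            TensorProduct.map f (LinearMap.id : C →ₗ[R] C)) ∘ₗ Coalgebra.comul from by
              simp only [LinearMap.comp_assoc]]
        rw [LinearMap.rTensor_comp, ← mapId_eq_rTensor]
        rfl

/-- Left-colinear maps commute with `rAct f`. -/
private lemma swap_rAct (f : Module.Dual R C) (g : C →ₗ[R] C)
    (hg : Coalgebra.comul ∘ₗ g
      = TensorProduct.map g (LinearMap.id : C →ₗ[R] C) ∘ₗ Coalgebra.comul) :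
    g ∘ₗ rAct f = rAct f ∘ₗ g := by
  have S1 : g ∘ₗ (TensorProduct.rid R C).toLinearMap
      = (TensorProduct.rid R C).toLinearMap ∘ₗ LinearMap.rTensor R g := by
    apply TensorProduct.ext'; intro x r; simp
  have S2 : LinearMap.rTensor R g ∘ₗ TensorProduct.map (LinearMap.id : C →ₗ[R] C) f
      = TensorProduct.map (LinearMap.id : C →ₗ[R] C) f ∘ₗ LinearMap.rTensor C g := by
    apply TensorProduct.ext'; intro x y; simp
  have hg' : LinearMap.rTensor C g ∘ₗ Coalgebra.comul = Coalgebra.comul ∘ₗ g := by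
    rw [hg]; rfl
  calc g ∘ₗ rAct f
      = (g ∘ₗ (TensorProduct.rid R C).toLinearMap) ∘ₗ
          (TensorProduct.map (LinearMap.id : C →ₗ[R] C) f ∘ₗ Coalgebra.comul) := by
        rw [rAct]; simp only [LinearMap.comp_assoc]
    _ = ((TensorProduct.rid R C).toLinearMap ∘ₗ LinearMap.rTensor R g) ∘ₗ
          (TensorProduct.map (LinearMap.id : C →ₗ[R] C) f ∘ₗ Coalgebra.comul) := by rw [S1]
    _ = (TensorProduct.rid R C).toLinearMap ∘ₗ
          ((LinearMap.rTensor R g ∘ₗ TensorProduct.map (LinearMap.id : C →ₗ[R] C) f) ∘ₗ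
            Coalgebra.comul) := by simp only [LinearMap.comp_assoc]
    _ = (TensorProduct.rid R C).toLinearMap ∘ₗ
          ((TensorProduct.map (LinearMap.id : C →ₗ[R] C) f ∘ₗ LinearMap.rTensor C g) ∘ₗ
            Coalgebra.comul) := by rw [S2]
    _ = ((TensorProduct.rid R C).toLinearMap ∘ₗ
          TensorProduct.map (LinearMap.id : C →ₗ[R] C) f) ∘ₗ
            (LinearMap.rTensor C g ∘ₗ Coalgebra.comul) := by simp only [LinearMap.comp_assoc]
    _ = ((TensorProduct.rid R C).toLinearMap ∘ₗ
          TensorProduct.map (LinearMap.id : C →ₗ[R] C) f) ∘ₗ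
            (Coalgebra.comul ∘ₗ g) := by rw [hg']
    _ = rAct f ∘ₗ g := by rw [rAct]; simp only [LinearMap.comp_assoc]

/-- Lemma 4.6: `g ↦ ε ∘ g` is an injective algebra map from the bicolinear
endomorphisms of `C` onto the subalgebra `𝐂(C) = {f | f ⇀ · = · ↼ f}` of the
convolution dual, with inverse `f ↦ (c ↦ Σ c₁ f(c₂))`; consequently the
endomorphism ring of `C` as a `(C,C)`-bicomodule is commutative. -/
theorem stmt15 :
    (∀ g : C →ₗ[R] C, IsBicolinear g → rAct (psiMap g) = lAct (psiMap g)) ∧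
    (∀ g : C →ₗ[R] C, IsBicolinear g → rAct (psiMap g) = g) ∧
    (∀ f : Module.Dual R C, rAct f = lAct f → psiMap (rAct f) = f) ∧
    (∀ f : Module.Dual R C, rAct f = lAct f → IsBicolinear (rAct f)) ∧
    (∀ g h : C →ₗ[R] C, IsBicolinear g → IsBicolinear h → psiMap g = psiMap h → g = h) ∧
    (∀ g h : C →ₗ[R] C, IsBicolinear g → IsBicolinear h →
      psiMap (g ∘ₗ h) = conv (psiMap g) (psiMap h)) ∧
    (∀ g h : C →ₗ[R] C, IsBicolinear g → IsBicolinear h → g ∘ₗ h = h ∘ₗ g) := by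
  refine ⟨?_, ?_, ?_, ?_, ?_, ?_, ?_⟩
  · intro g hg
    rw [rAct_psi g hg.2, lAct_psi g hg.1]
  · intro g hg
    exact rAct_psi g hg.2
  · intro f _
    exact psi_rAct f
  · intro f hf
    refine ⟨?_, rAct_right f⟩
    rw [hf]
    exact lAct_left f
  · intro g h hg hh hgh
    rw [← rAct_psi g hg.2, ← rAct_psi h hh.2, hgh]
  · intro g h hg hh
    have key : ((Coalgebra.counit : C →ₗ[R] R) ∘ₗ g) ∘ₗ ((TensorProduct.rid R C).toLinearMap ∘ₗ
        TensorProduct.map (LinearMap.id : C →ₗ[R] C) (psiMap h))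
        = LinearMap.mul' R R ∘ₗ TensorProduct.map (psiMap g) (psiMap h) := by
      apply TensorProduct.ext'; intro x y
      simp [psiMap, mul_comm]
    calc psiMap (g ∘ₗ h)
        = psiMap (g ∘ₗ rAct (psiMap h)) := by rw [rAct_psi h hh.2]
      _ = (((Coalgebra.counit : C →ₗ[R] R) ∘ₗ g) ∘ₗ ((TensorProduct.rid R C).toLinearMap ∘ₗ
            TensorProduct.map (LinearMap.id : C →ₗ[R] C) (psiMap h))) ∘ₗ Coalgebra.comul := by
          rw [psiMap, rAct]; simp only [LinearMap.comp_assoc]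
      _ = (LinearMap.mul' R R ∘ₗ TensorProduct.map (psiMap g) (psiMap h)) ∘ₗ
            Coalgebra.comul := by rw [key]
      _ = conv (psiMap g) (psiMap h) := by rw [conv]; simp only [LinearMap.comp_assoc]
  · intro g h hg hh
    calc g ∘ₗ h
        = g ∘ₗ rAct (psiMap h) := by rw [rAct_psi h hh.2]
      _ = rAct (psiMap h) ∘ₗ g := swap_rAct (psiMap h) g hg.1
      _ = h ∘ₗ g := by rw [rAct_psi h hh.2]
end

section
/- Let C be a coalgebra over a commutative ring R. Every (C,C)-subbicomodule D ⊆ C (i.e., R-submodule with Δ(D) ⊆ image of D⊗C and C⊗D inside C⊗C) is fully invariant: g(D) ⊆ D for every (C,C)-bicolinear endomorphism g of C. That is, C is a duo object in the category of (C,C)-bicomodules. -/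
open TensorProduct

/-- Every `(C,C)`-subbicomodule `D` of a coalgebra `C` (an `R`-submodule with
`Δ(D)` contained in the images of `D ⊗ C` and `C ⊗ D` in `C ⊗ C`) is fully
invariant under every bicolinear endomorphism of `C`: `C` is a duo object in
its category of bicomodules. -/
theorem stmt16 (R C : Type*) [CommRing R] [AddCommGroup C] [Module R C] [Coalgebra R C]
    (D : Submodule R C)
    (hD : ∀ d ∈ D, Coalgebra.comul (R := R) d ∈
      LinearMap.range (TensorProduct.map D.subtype (LinearMap.id : C →ₗ[R] C)) ⊓
      LinearMap.range (TensorProduct.map (LinearMap.id : C →ₗ[R] C) D.subtype)) :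
    ∀ g : C →ₗ[R] C,
      (Coalgebra.comul ∘ₗ g =
          (TensorProduct.map g (LinearMap.id : C →ₗ[R] C)) ∘ₗ Coalgebra.comul ∧
       Coalgebra.comul ∘ₗ g =
          (TensorProduct.map (LinearMap.id : C →ₗ[R] C) g) ∘ₗ Coalgebra.comul) →
      ∀ d ∈ D, g d ∈ D := by
  intro g ⟨_, hg⟩ d hd
  obtain ⟨⟨t, ht⟩, -⟩ := hD d hd
  -- ψ sends x ⊗ y to ε(g y) • x
  set ψ : C ⊗[R] C →ₗ[R] C :=
    (TensorProduct.rid R C).toLinearMap ∘ₗ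
      LinearMap.lTensor C (Coalgebra.counit ∘ₗ g) with hψ
  have key : g d = ψ (Coalgebra.comul d) := by
    have h1 : (TensorProduct.map (LinearMap.id : C →ₗ[R] C) g) (Coalgebra.comul d)
        = Coalgebra.comul (g d) := (LinearMap.congr_fun hg d).symm
    have h2 : LinearMap.lTensor C g = TensorProduct.map (LinearMap.id : C →ₗ[R] C) g := rfl
    simp only [hψ, LinearMap.comp_apply, LinearEquiv.coe_coe, LinearMap.lTensor_comp,
      h2, h1]
    rw [show (LinearMap.lTensor C (Coalgebra.counit (R := R)))
        (Coalgebra.comul (g d)) = g d ⊗ₜ[R] 1 from Coalgebra.lTensor_counit_comul _]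
    simp
  rw [key, ← ht]
  clear ht key hd
  induction t using TensorProduct.induction_on with
  | zero => simp
  | tmul x y =>
      have : ψ ((TensorProduct.map D.subtype LinearMap.id) (x ⊗ₜ[R] y))
          = (Coalgebra.counit (R := R) (g y)) • (x : C) := by
        simp [hψ, TensorProduct.smul_tmul']
      rw [this]
      exact D.smul_mem _ x.2
  | add a b ha hb =>
      rw [map_add, map_add]
      exact D.add_mem ha hb
end
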